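/- In the coordinate model of the RBB iteration with constant regularization parameter (τ_k = τ ≥ 0 for all k) and with λ_1 < λ_n, set θ = 1 − λ_1/λ_n and, for each i, C_i = max{ λ_i/λ_1 − 1, 1 − λ_i/λ_n }. Define constants F_1 = |e_1^0| and, recursively for 2 ≤ i ≤ n, F_i = max{ |e_i^0|, |e_i^1|/θ, θ^{-2}·C_i²·sqrt( Σ_{j=1}^{i-1} (λ_j²(1+τλ_j²))/(λ_i²(1+τλ_i²)) · F_j² ) }. Then for every k ≥ 1 and every i ∈ {1,…,n}: |e_i^k| ≤ θ^k · F_i; that is, each coordinate of the error converges to zero at least R-linearly with rate θ = 1 − 1/κ, where κ = λ_n/λ_1. -/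

import Mathlib

/-!
At step `k` the `i`-th coordinate of the error is multiplied by `1 - λ_i / α_k`, and since
`α_k ∈ [λ_1, λ_n]` this factor never exceeds `θ = 1 - λ_1 / λ_n`. So coordinate `i` fails to
contract by `θ` only if `α_k` lies well below `λ_i`. But `α_k` is a mean of the eigenvalues weighted
by `λ_j²(1 + τλ_j²)(e_j^{k-1})²`, so this happens only when the coordinates `j < i` carried a large
share of the weight one step earlier. Then `|e_i^{k+1}|` is at most `C_i²` times a weighted norm of
`(e_j^{k-1})_{j<i}`, and induction on `i` gives the rate `θ^k` for every coordinate.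
-/

open Finset

def rbbWeight (t x : ℝ) : ℝ := x ^ 2 * (1 + t * x ^ 2)

lemma rbbWeight_pos {t x : ℝ} (ht : 0 ≤ t) (hx : x ≠ 0) : 0 < rbbWeight t x := by
  unfold rbbWeight; positivity

section WeightedMean

variable {ι : Type*} [Fintype ι] {lam q : ι → ℝ} {a b : ℝ}

lemma weightedMean_mem_Icc (hq : ∀ j, 0 ≤ q j) (hQ : 0 < ∑ j, q j)
    (hlam : ∀ j, lam j ∈ Set.Icc a b) :
    (∑ j, lam j * q j) / ∑ j, q j ∈ Set.Icc a b := by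
  rw [Set.mem_Icc, le_div_iff₀ hQ, div_le_iff₀ hQ, mul_sum, mul_sum]
  exact ⟨sum_le_sum fun j _ => mul_le_mul_of_nonneg_right (hlam j).1 (hq j),
    sum_le_sum fun j _ => mul_le_mul_of_nonneg_right (hlam j).2 (hq j)⟩

variable [LinearOrder ι]

lemma mul_sum_sub_sum_mul_le (hlam : ∀ j, a ≤ lam j) (hmono : Monotone lam)
    (hq : ∀ j, 0 ≤ q j) (i : ι) :
    lam i * ∑ j, q j - ∑ j, lam j * q j ≤ (lam i - a) * ∑ j ∈ univ.filter (· < i), q j := by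
  have hsplit : lam i * ∑ j, q j - ∑ j, lam j * q j =
      ∑ j ∈ univ.filter (· < i), (lam i - lam j) * q j +
        ∑ j ∈ univ.filter (fun j => ¬ j < i), (lam i - lam j) * q j := by
    rw [sum_filter_add_sum_filter_not, mul_sum, ← sum_sub_distrib]
    exact sum_congr rfl fun j _ => by ring
  have hlow : ∑ j ∈ univ.filter (· < i), (lam i - lam j) * q j ≤
      ∑ j ∈ univ.filter (· < i), (lam i - a) * q j :=
    sum_le_sum fun j _ => mul_le_mul_of_nonneg_right (by linarith [hlam j]) (hq j)
  have hhigh : ∑ j ∈ univ.filter (fun j => ¬ j < i), (lam i - lam j) * q j ≤ 0 :=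
    sum_nonpos fun j hj => mul_nonpos_of_nonpos_of_nonneg
      (sub_nonpos.2 (hmono (not_lt.1 (mem_filter.1 hj).2))) (hq j)
  rw [hsplit, mul_sum]
  linarith

lemma div_weightedMean_sub_one_mul_le (ha : 0 < a) (hlam : ∀ j, a ≤ lam j)
    (hmono : Monotone lam) (hq : ∀ j, 0 ≤ q j) (hQ : 0 < ∑ j, q j) (i : ι) :
    (lam i / ((∑ j, lam j * q j) / ∑ j, q j) - 1) * q i ≤
      (lam i / a - 1) * ∑ j ∈ univ.filter (· < i), q j := by
  set D := ∑ j, q j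
  set N := ∑ j, lam j * q j
  set S := ∑ j ∈ univ.filter (· < i), q j
  have hND : a * D ≤ N := by
    rw [mul_sum]
    exact sum_le_sum fun j _ => mul_le_mul_of_nonneg_right (hlam j) (hq j)
  have hN : 0 < N := lt_of_lt_of_le (mul_pos ha hQ) hND
  have hqi : a * q i ≤ N :=
    le_trans (mul_le_mul_of_nonneg_left (single_le_sum (fun j _ => hq j) (mem_univ i)) ha.le) hND
  have hmass : 0 ≤ (lam i - a) * S :=
    mul_nonneg (sub_nonneg.2 (hlam i)) (sum_nonneg fun j _ => hq j)
  calc (lam i / (N / D) - 1) * q i = (lam i * D - N) * q i / N := by field_simp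
    _ ≤ (lam i - a) * S * q i / N := by
      gcongr
      · exact hq i
      · exact mul_sum_sub_sum_mul_le hlam hmono hq i
    _ ≤ (lam i - a) * S * (N / a) / N := by
      gcongr
      rwa [le_div_iff₀ ha, mul_comm]
    _ = (lam i / a - 1) * S := by field_simp

end WeightedMean

section Iteration

variable {ι : Type*} [Fintype ι] {lam : ι → ℝ} {a b t : ℝ} {e : ℕ → ι → ℝ} {α : ℕ → ℝ}

/-- `e k` is the error of the `k`-th RBB iterate, with constant regularization parameter `t`, in an
eigenbasis of the Hessian, whose eigenvalues `lam` lie in `[a, b]`; `α k` is the `k`-th step size. -/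
structure IsRBBIteration (lam : ι → ℝ) (a b t : ℝ) (e : ℕ → ι → ℝ) (α : ℕ → ℝ) : Prop where
  lower_pos : 0 < a
  mem_Icc : ∀ i, lam i ∈ Set.Icc a b
  reg_nonneg : 0 ≤ t
  stepsize_zero_mem_Icc : α 0 ∈ Set.Icc a b
  ne_zero : ∀ k, e k ≠ 0
  error_succ : ∀ k i, e (k + 1) i = (1 - lam i / α k) * e k i
  stepsize_succ : ∀ k, α (k + 1) =
    (∑ i, lam i * (rbbWeight t (lam i) * e k i ^ 2)) / ∑ i, rbbWeight t (lam i) * e k i ^ 2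

namespace IsRBBIteration

lemma weight_pos (h : IsRBBIteration lam a b t e α) (i : ι) : 0 < rbbWeight t (lam i) :=
  rbbWeight_pos h.reg_nonneg (h.lower_pos.trans_le (h.mem_Icc i).1).ne'

lemma sum_weight_pos (h : IsRBBIteration lam a b t e α) (k : ℕ) :
    0 < ∑ j, rbbWeight t (lam j) * e k j ^ 2 := by
  obtain ⟨i, hi⟩ := Function.ne_iff.1 (h.ne_zero k)
  exact sum_pos' (fun j _ => mul_nonneg (h.weight_pos j).le (sq_nonneg _))
    ⟨i, mem_univ i, mul_pos (h.weight_pos i) (pow_pos (abs_pos.2 hi) 2 |>.trans_eq (sq_abs _))⟩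

lemma stepsize_mem_Icc (h : IsRBBIteration lam a b t e α) : ∀ k, α k ∈ Set.Icc a b
  | 0 => h.stepsize_zero_mem_Icc
  | k + 1 => h.stepsize_succ k ▸ weightedMean_mem_Icc
      (fun j => mul_nonneg (h.weight_pos j).le (sq_nonneg _)) (h.sum_weight_pos k) h.mem_Icc

lemma stepsize_pos (h : IsRBBIteration lam a b t e α) (k : ℕ) : 0 < α k :=
  h.lower_pos.trans_le (h.stepsize_mem_Icc k).1

lemma abs_one_sub_div_stepsize_le (h : IsRBBIteration lam a b t e α) (k : ℕ) (i : ι) :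
    |1 - lam i / α k| ≤ max (lam i / a - 1) (1 - lam i / b) := by
  have hlam := h.lower_pos.trans_le (h.mem_Icc i).1
  have hlow : lam i / b ≤ lam i / α k :=
    div_le_div_of_nonneg_left hlam.le (h.stepsize_pos k) (h.stepsize_mem_Icc k).2
  have hhigh : lam i / α k ≤ lam i / a :=
    div_le_div_of_nonneg_left hlam.le h.lower_pos (h.stepsize_mem_Icc k).1
  rw [abs_le]
  constructor <;> linarith [le_max_left (lam i / a - 1) (1 - lam i / b),
    le_max_right (lam i / a - 1) (1 - lam i / b)]

lemma one_sub_div_stepsize_le (h : IsRBBIteration lam a b t e α) (k : ℕ) (i : ι) :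
    1 - lam i / α k ≤ 1 - a / b := by
  have : a / b ≤ lam i / α k :=
    div_le_div₀ (h.lower_pos.le.trans (h.mem_Icc i).1) (h.mem_Icc i).1 (h.stepsize_pos k)
      (h.stepsize_mem_Icc k).2
  linarith

lemma abs_one_sub_div_stepsize_le_of_eq (h : IsRBBIteration lam a b t e α) (k : ℕ) {i : ι}
    (hi : lam i = a) : |1 - lam i / α k| ≤ 1 - a / b := by
  have : lam i / α k ≤ 1 := (div_le_one (h.stepsize_pos k)).2 (hi ▸ (h.stepsize_mem_Icc k).1)
  rw [abs_of_nonneg (by linarith)]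
  exact h.one_sub_div_stepsize_le k i

variable [LinearOrder ι]

lemma mul_sq_error_le (h : IsRBBIteration lam a b t e α) (hmono : Monotone lam) (m : ℕ)
    (i : ι) :
    (lam i / α (m + 1) - 1) * e m i ^ 2 ≤
      (lam i / a - 1) * ∑ j ∈ univ.filter (· < i),
        rbbWeight t (lam j) / rbbWeight t (lam i) * e m j ^ 2 := by
  have hmean := div_weightedMean_sub_one_mul_le h.lower_pos (fun j => (h.mem_Icc j).1) hmono
    (fun j => mul_nonneg (h.weight_pos j).le (sq_nonneg (e m j))) (h.sum_weight_pos m) i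
  rw [← h.stepsize_succ m] at hmean
  have hw := h.weight_pos i
  calc (lam i / α (m + 1) - 1) * e m i ^ 2
      = (lam i / α (m + 1) - 1) * (rbbWeight t (lam i) * e m i ^ 2) / rbbWeight t (lam i) := by
        field_simp
    _ ≤ (lam i / a - 1) * (∑ j ∈ univ.filter (· < i), rbbWeight t (lam j) * e m j ^ 2) /
          rbbWeight t (lam i) := by gcongr
    _ = _ := by
        rw [mul_div_assoc, sum_div]
        congr 1
        exact sum_congr rfl fun j _ => by ring

/-- The factor `1 - lam i / α (m + 1)` exceeds `1 - a / b` in modulus only when it is negative,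
i.e. when `α (m + 1)` undershoots `lam i`, and `mul_sq_error_le` bounds that undershoot. -/
lemma sq_abs_error_le_of_lt (h : IsRBBIteration lam a b t e α) (hmono : Monotone lam) (m : ℕ)
    (i : ι) (hbad : 1 - a / b < |1 - lam i / α (m + 1)|) :
    |e (m + 2) i| ^ 2 ≤ max (lam i / a - 1) (1 - lam i / b) ^ 4 *
      ∑ j ∈ univ.filter (· < i), rbbWeight t (lam j) / rbbWeight t (lam i) * e m j ^ 2 := by
  set C := max (lam i / a - 1) (1 - lam i / b)
  set S := ∑ j ∈ univ.filter (· < i), rbbWeight t (lam j) / rbbWeight t (lam i) * e m j ^ 2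
  set x := lam i / α (m + 1) - 1
  have hx : |1 - lam i / α (m + 1)| = x := by
    rw [abs_of_neg, neg_sub]
    by_contra! hnn
    rw [abs_of_nonneg hnn] at hbad
    exact (h.one_sub_div_stepsize_le (m + 1) i).not_gt hbad
  have hC : 0 ≤ C :=
    le_max_of_le_left (sub_nonneg.2 ((one_le_div h.lower_pos).2 (h.mem_Icc i).1))
  have hxC : x ≤ C := hx ▸ h.abs_one_sub_div_stepsize_le (m + 1) i
  have hx0 : 0 ≤ x := hx ▸ abs_nonneg _
  have hrm : (1 - lam i / α m) ^ 2 ≤ C ^ 2 := by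
    rw [← sq_abs]
    exact pow_le_pow_left₀ (abs_nonneg _) (h.abs_one_sub_div_stepsize_le m i) 2
  have hxS : x * e m i ^ 2 ≤ C * S :=
    (h.mul_sq_error_le hmono m i).trans (mul_le_mul_of_nonneg_right (le_max_left _ _)
      (sum_nonneg fun j _ => mul_nonneg (div_pos (h.weight_pos j) (h.weight_pos i)).le
        (sq_nonneg _)))
  calc |e (m + 2) i| ^ 2 = (x * (1 - lam i / α m) ^ 2) * (x * e m i ^ 2) := by
        rw [sq_abs, h.error_succ, h.error_succ, mul_pow, ← sq_abs (1 - _), hx]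
        ring
    _ ≤ (C * C ^ 2) * (C * S) :=
        mul_le_mul (mul_le_mul hxC hrm (sq_nonneg _) hC) hxS (mul_nonneg hx0 (sq_nonneg _))
          (mul_nonneg hC (sq_nonneg _))
    _ = C ^ 4 * S := by ring

lemma abs_error_le_of_forall_lt (h : IsRBBIteration lam a b t e α) (hmono : Monotone lam)
    (hab : a < b) {F : ι → ℝ} (i : ι) (hF0 : |e 0 i| ≤ F i) (hF1 : |e 1 i| ≤ (1 - a / b) * F i)
    (hF2 : ((1 - a / b) ^ 2)⁻¹ * max (lam i / a - 1) (1 - lam i / b) ^ 2 *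
      √(∑ j ∈ univ.filter (· < i), rbbWeight t (lam j) / rbbWeight t (lam i) * F j ^ 2) ≤ F i)
    (hlt : ∀ j < i, ∀ m, |e m j| ≤ (1 - a / b) ^ m * F j) (k : ℕ) :
    |e k i| ≤ (1 - a / b) ^ k * F i := by
  set θ := 1 - a / b
  have hθ : 0 < θ := sub_pos.2 ((div_lt_one (h.lower_pos.trans hab)).2 hab)
  induction k using Nat.twoStepInduction with
  | zero => simpa using hF0
  | one => simpa using hF1
  | more m _ ih =>
    by_cases hgood : |1 - lam i / α (m + 1)| ≤ θ
    · calc |e (m + 2) i| = |1 - lam i / α (m + 1)| * |e (m + 1) i| := by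
            rw [h.error_succ, abs_mul]
        _ ≤ θ * (θ ^ (m + 1) * F i) := mul_le_mul hgood ih (abs_nonneg _) hθ.le
        _ = θ ^ (m + 2) * F i := by ring
    set C := max (lam i / a - 1) (1 - lam i / b)
    set w := fun j => rbbWeight t (lam j) / rbbWeight t (lam i)
    set S := ∑ j ∈ univ.filter (· < i), w j * F j ^ 2
    have hw : ∀ j, 0 ≤ w j := fun j => (div_pos (h.weight_pos j) (h.weight_pos i)).le
    have hsum : ∑ j ∈ univ.filter (· < i), w j * e m j ^ 2 ≤ (θ ^ m) ^ 2 * S := by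
      rw [mul_sum]
      refine sum_le_sum fun j hj => ?_
      have hj := pow_le_pow_left₀ (abs_nonneg _) (hlt j (mem_filter.1 hj).2 m) 2
      rw [sq_abs] at hj
      nlinarith [hw j]
    have hsq : |e (m + 2) i| ^ 2 ≤ (θ ^ m * (C ^ 2 * √S)) ^ 2 := by
      rw [mul_pow, mul_pow, ← pow_mul, Real.sq_sqrt (sum_nonneg fun j _ =>
        mul_nonneg (hw j) (sq_nonneg _))]
      calc |e (m + 2) i| ^ 2 ≤ C ^ 4 * ∑ j ∈ univ.filter (· < i), w j * e m j ^ 2 :=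
            h.sq_abs_error_le_of_lt hmono m i (not_le.1 hgood)
        _ ≤ C ^ 4 * ((θ ^ m) ^ 2 * S) := by gcongr
        _ = _ := by ring
    calc |e (m + 2) i| ≤ θ ^ m * (C ^ 2 * √S) :=
          (pow_le_pow_iff_left₀ (abs_nonneg _) (by positivity) two_ne_zero).1 hsq
      _ = θ ^ (m + 2) * ((θ ^ 2)⁻¹ * C ^ 2 * √S) := by field_simp; ring
      _ ≤ θ ^ (m + 2) * F i := by gcongr

lemma abs_error_le (h : IsRBBIteration lam a b t e α) (hmono : Monotone lam) (hab : a < b)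
    {F : ι → ℝ} (hF0 : ∀ i, |e 0 i| ≤ F i) (hF1 : ∀ i, |e 1 i| ≤ (1 - a / b) * F i)
    (hF2 : ∀ i, ((1 - a / b) ^ 2)⁻¹ * max (lam i / a - 1) (1 - lam i / b) ^ 2 *
      √(∑ j ∈ univ.filter (· < i), rbbWeight t (lam j) / rbbWeight t (lam i) * F j ^ 2) ≤ F i)
    (k : ℕ) (i : ι) : |e k i| ≤ (1 - a / b) ^ k * F i := by
  induction i using WellFoundedLT.induction generalizing k with
  | _ i ih => exact h.abs_error_le_of_forall_lt hmono hab i (hF0 i) (hF1 i) (hF2 i) ih k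

end IsRBBIteration

end Iteration

theorem rbb_coordinate_rlinear_rate_general
    (n : ℕ) (lam : Fin (n + 1) → ℝ) (hpos : 0 < lam 0) (hmono : Monotone lam)
    (hgap : lam 0 < lam (Fin.last n))
    (e : ℕ → Fin (n + 1) → ℝ) (α τ : ℕ → ℝ)
    (t : ℝ) (ht : 0 ≤ t) (hconst : ∀ k, τ k = t)
    (hα0 : lam 0 ≤ α 0 ∧ α 0 ≤ lam (Fin.last n))
    (he : ∀ k, e k ≠ 0)
    (hrec : ∀ k i, e (k + 1) i = (1 - lam i / α k) * e k i)
    (hα : ∀ k, α (k + 1) =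
      (∑ i, lam i ^ 3 * (1 + τ k * lam i ^ 2) * e k i ^ 2) /
      (∑ i, lam i ^ 2 * (1 + τ k * lam i ^ 2) * e k i ^ 2))
    (θ : ℝ) (hθ : θ = 1 - lam 0 / lam (Fin.last n))
    (C : Fin (n + 1) → ℝ)
    (hC : ∀ i, C i = max (lam i / lam 0 - 1) (1 - lam i / lam (Fin.last n)))
    (F : Fin (n + 1) → ℝ)
    (hF0 : F 0 = |e 0 0|)
    (hFrec : ∀ i : Fin (n + 1), i ≠ 0 →
      F i = max (|e 0 i|) (max (|e 1 i| / θ)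
        ((θ ^ 2)⁻¹ * C i ^ 2 *
          Real.sqrt (∑ j ∈ Finset.univ.filter (fun j => j < i),
            (lam j ^ 2 * (1 + t * lam j ^ 2)) / (lam i ^ 2 * (1 + t * lam i ^ 2))
              * F j ^ 2)))) :
    ∀ k, 1 ≤ k → ∀ i : Fin (n + 1), |e k i| ≤ θ ^ k * F i := by
  have h : IsRBBIteration lam (lam 0) (lam (Fin.last n)) t e α :=
    { lower_pos := hpos
      mem_Icc := fun i => ⟨hmono (Fin.zero_le i), hmono (Fin.le_last i)⟩
      reg_nonneg := ht
      stepsize_zero_mem_Icc := hα0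
      ne_zero := he
      error_succ := hrec
      stepsize_succ := fun k => by
        simp only [hα k, hconst, rbbWeight]
        congr 1
        exact sum_congr rfl fun i _ => by ring }
  have hθpos : 0 < θ := hθ ▸ sub_pos.2 ((div_lt_one (hpos.trans hgap)).2 hgap)
  subst hθ
  intro k _ i
  refine h.abs_error_le hmono hgap (fun i => ?_) (fun i => ?_) (fun i => ?_) k i <;>
    rcases eq_or_ne i 0 with rfl | hi
  · exact hF0.ge
  · exact hFrec i hi ▸ le_max_left _ _
  · rw [hrec, abs_mul, hF0]
    exact mul_le_mul_of_nonneg_right (h.abs_one_sub_div_stepsize_le_of_eq 0 rfl) (abs_nonneg _)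
  · rw [← div_le_iff₀' hθpos, hFrec i hi]
    exact (le_max_left _ _).trans (le_max_right _ _)
  · simp [hF0]
  · rw [← hC i, hFrec i hi]
    exact (le_max_right _ _).trans (le_max_right _ _)

/-- R-linear convergence of the RBB coordinate iteration with constant
regularization parameter `τ_k = t ≥ 0` and `λ_1 < λ_n`. With `θ = 1 − λ_1/λ_n`,
`C_i = max{λ_i/λ_1 − 1, 1 − λ_i/λ_n}`, `F_1 = |e_1^0|` and, recursively,
`F_i = max{|e_i^0|, |e_i^1|/θ, θ⁻²C_i²√(Σ_{j<i} (λ_j²(1+tλ_j²))/(λ_i²(1+tλ_i²))·F_j²)}`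
for `i ≥ 2`, every coordinate satisfies `|e_i^k| ≤ θ^k F_i` for all `k ≥ 1`. -/
theorem rbb_coordinate_rlinear_rate
    (n : ℕ) (lam : Fin (n + 1) → ℝ) (hpos : 0 < lam 0) (hmono : Monotone lam)
    (hgap : lam 0 < lam (Fin.last n))
    (T : ℝ) (hT : 0 ≤ T)
    (e : ℕ → Fin (n + 1) → ℝ) (α τ : ℕ → ℝ)
    (hτ : ∀ k, 0 ≤ τ k ∧ τ k ≤ T)
    (t : ℝ) (ht : 0 ≤ t) (hconst : ∀ k, τ k = t)
    (hα0 : lam 0 ≤ α 0 ∧ α 0 ≤ lam (Fin.last n))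
    (he : ∀ k, e k ≠ 0)
    (hrec : ∀ k i, e (k + 1) i = (1 - lam i / α k) * e k i)
    (hα : ∀ k, α (k + 1) =
      (∑ i, lam i ^ 3 * (1 + τ k * lam i ^ 2) * e k i ^ 2) /
      (∑ i, lam i ^ 2 * (1 + τ k * lam i ^ 2) * e k i ^ 2))
    (θ : ℝ) (hθ : θ = 1 - lam 0 / lam (Fin.last n))
    (C : Fin (n + 1) → ℝ)
    (hC : ∀ i, C i = max (lam i / lam 0 - 1) (1 - lam i / lam (Fin.last n)))
    (F : Fin (n + 1) → ℝ)
    (hF0 : F 0 = |e 0 0|)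
    (hFrec : ∀ i : Fin (n + 1), i ≠ 0 →
      F i = max (|e 0 i|) (max (|e 1 i| / θ)
        ((θ ^ 2)⁻¹ * C i ^ 2 *
          Real.sqrt (∑ j ∈ Finset.univ.filter (fun j => j < i),
            (lam j ^ 2 * (1 + t * lam j ^ 2)) / (lam i ^ 2 * (1 + t * lam i ^ 2))
              * F j ^ 2)))) :
    ∀ k, 1 ≤ k → ∀ i : Fin (n + 1), |e k i| ≤ θ ^ k * F i :=
  rbb_coordinate_rlinear_rate_general n lam hpos hmono hgap e α τ t ht hconst hα0 he hrec hα θ hθ C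
    hC F hF0 hFrec
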